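/- An empirical model e satisfies No-Signalling if and only if e is realized by an schv model satisfying Lambda-Independence. -/

import Mathlib

/-!
No-Signalling says that the conditional distributions `e_U` agree pairwise on overlaps of
contexts. Such a compatible family of signed weights is always the family of marginals of one
signed weight `d` on global assignments: add the contexts one at a time, correcting `d` by the
defect of its marginal on the new context `V`, extended to `Ω` by a constant off `V`; this
correction has zero marginal on `U ∩ V` for every earlier `U`, so earlier marginals survive.
Then `m(ω, U) = d(ω) e(U)` is a Lambda-independent realization. Conversely, Lambda-Independence
makes every `e_U` the marginal of `m_Ω`, and marginals of a single weight are compatible.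
-/

open Finset

noncomputable section

/-- Restriction of a global assignment `ω : X → O` to a context `U`. -/
def restr {X O : Type} (U : Finset X) (ω : X → O) : {x // x ∈ U} → O :=
  fun x => ω x.1

/-- Restriction of a section on `U` along a subset inclusion `V ⊆ U`. -/
def restrSec {X O : Type} {U V : Finset X} (h : V ⊆ U)
    (t : {x // x ∈ U} → O) : {x // x ∈ V} → O :=
  fun x => t ⟨x.1, h x.2⟩

/-- The total weight `e(U)` of a context `U` under the table `e`. -/
def eCtx {X O : Type} [Fintype X] [DecidableEq X] [Fintype O] [DecidableEq O]
    (𝒰 : Finset (Finset X))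
    (e : (U : {U // U ∈ 𝒰}) → ({x // x ∈ U.1} → O) → ℝ)
    (U : {U // U ∈ 𝒰}) : ℝ :=
  ∑ s : {x // x ∈ U.1} → O, e U s

/-- `e` is an empirical model over the cover `𝒰`: it is a nonnegative table of
total mass one, assigning positive weight to every context. -/
def IsEmpirical {X O : Type} [Fintype X] [DecidableEq X] [Fintype O] [DecidableEq O]
    (𝒰 : Finset (Finset X))
    (e : (U : {U // U ∈ 𝒰}) → ({x // x ∈ U.1} → O) → ℝ) : Prop :=
  (∀ U s, 0 ≤ e U s) ∧
  (∑ U : {U // U ∈ 𝒰}, eCtx 𝒰 e U = 1) ∧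
  (∀ U : {U // U ∈ 𝒰}, 0 < eCtx 𝒰 e U)

/-- The conditional probability `e_U(s) = e(U,s)/e(U)`. -/
def eCond {X O : Type} [Fintype X] [DecidableEq X] [Fintype O] [DecidableEq O]
    (𝒰 : Finset (Finset X))
    (e : (U : {U // U ∈ 𝒰}) → ({x // x ∈ U.1} → O) → ℝ)
    (U : {U // U ∈ 𝒰}) (s : {x // x ∈ U.1} → O) : ℝ :=
  e U s / eCtx 𝒰 e U

/-- The No-Signalling condition: for any two contexts, the two conditional
distributions have the same marginal on the intersection. -/
def NoSignalling {X O : Type} [Fintype X] [DecidableEq X] [Fintype O] [DecidableEq O]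
    (𝒰 : Finset (Finset X))
    (e : (U : {U // U ∈ 𝒰}) → ({x // x ∈ U.1} → O) → ℝ) : Prop :=
  ∀ U U' : {U // U ∈ 𝒰}, ∀ s : {x // x ∈ U.1 ∩ U'.1} → O,
    (∑ t : {x // x ∈ U.1} → O,
      if restrSec (V := U.1 ∩ U'.1) (fun _ hx => (Finset.mem_inter.mp hx).1) t = s
        then eCond 𝒰 e U t else 0) =
    (∑ t' : {x // x ∈ U'.1} → O,
      if restrSec (V := U.1 ∩ U'.1) (fun _ hx => (Finset.mem_inter.mp hx).2) t' = s
        then eCond 𝒰 e U' t' else 0)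

/-- Marginal of an schv model on global assignments. -/
def mOmega {X O : Type} [Fintype X] [DecidableEq X] [Fintype O] [DecidableEq O]
    (𝒰 : Finset (Finset X)) (m : (X → O) → {U // U ∈ 𝒰} → ℝ) (ω : X → O) : ℝ :=
  ∑ U : {U // U ∈ 𝒰}, m ω U

/-- Marginal of an schv model on contexts. -/
def mCtx {X O : Type} [Fintype X] [DecidableEq X] [Fintype O] [DecidableEq O]
    (𝒰 : Finset (Finset X)) (m : (X → O) → {U // U ∈ 𝒰} → ℝ) (U : {U // U ∈ 𝒰}) : ℝ :=
  ∑ ω : X → O, m ω U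

/-- `m` is a signed canonical hidden-variable model: a signed measure of total mass one
on `Ω × 𝒰`. -/
def IsSchv {X O : Type} [Fintype X] [DecidableEq X] [Fintype O] [DecidableEq O]
    (𝒰 : Finset (Finset X)) (m : (X → O) → {U // U ∈ 𝒰} → ℝ) : Prop :=
  ∑ ω : X → O, ∑ U : {U // U ∈ 𝒰}, m ω U = 1

/-- Lambda-Independence: `m` factors as the product of its two marginals. -/
def LambdaIndep {X O : Type} [Fintype X] [DecidableEq X] [Fintype O] [DecidableEq O]
    (𝒰 : Finset (Finset X)) (m : (X → O) → {U // U ∈ 𝒰} → ℝ) : Prop :=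
  ∀ ω U, m ω U = mOmega 𝒰 m ω * mCtx 𝒰 m U

/-- The canonical hidden-variable model `m` realizes the empirical table `e`. -/
def Realizes {X O : Type} [Fintype X] [DecidableEq X] [Fintype O] [DecidableEq O]
    (𝒰 : Finset (Finset X)) (m : (X → O) → {U // U ∈ 𝒰} → ℝ)
    (e : (U : {U // U ∈ 𝒰}) → ({x // x ∈ U.1} → O) → ℝ) : Prop :=
  ∀ (U : {U // U ∈ 𝒰}) (s : {x // x ∈ U.1} → O),
    e U s = ∑ ω : X → O, if restr U.1 ω = s then m ω U else 0

/-- The linear map `L : ℝ^Ω → ℝ^E`. -/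
def Lmap {X O : Type} [Fintype X] [DecidableEq X] [Fintype O] [DecidableEq O]
    (𝒰 : Finset (Finset X)) (v : (X → O) → ℝ) :
    (Σ U : {U // U ∈ 𝒰}, ({x // x ∈ U.1} → O)) → ℝ :=
  fun p => ∑ ω : X → O, if restr p.1.1 ω = p.2 then v ω else 0

/-- The vector in `ℝ^E` induced by an empirical table `e`. -/
def indVec {X O : Type} [Fintype X] [DecidableEq X] [Fintype O] [DecidableEq O]
    (𝒰 : Finset (Finset X))
    (e : (U : {U // U ∈ 𝒰}) → ({x // x ∈ U.1} → O) → ℝ) :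
    (Σ U : {U // U ∈ 𝒰}, ({x // x ∈ U.1} → O)) → ℝ :=
  fun p => eCond 𝒰 e p.1 p.2

def pushfwd {α β : Type*} [Fintype α] [DecidableEq β] (φ : α → β) :
    (α → ℝ) →ₗ[ℝ] β → ℝ where
  toFun d b := ∑ a, if φ a = b then d a else 0
  map_add' d d' := by
    ext b
    simp only [Pi.add_apply, ← Finset.sum_add_distrib]
    exact Finset.sum_congr rfl fun a _ => by split_ifs <;> simp
  map_smul' c d := by
    ext b
    simp only [Pi.smul_apply, smul_eq_mul, RingHom.id_apply, Finset.mul_sum]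
    exact Finset.sum_congr rfl fun a _ => by split_ifs <;> simp

section Pushforward

variable {α β γ : Type*} [Fintype α]

theorem pushfwd_apply [DecidableEq β] (φ : α → β) (d : α → ℝ) (b : β) :
    pushfwd φ d b = ∑ a, if φ a = b then d a else 0 :=
  rfl

theorem pushfwd_id [DecidableEq α] (d : α → ℝ) : pushfwd id d = d := by
  ext b
  simp [pushfwd_apply]

theorem pushfwd_pushfwd [Fintype β] [DecidableEq β] [DecidableEq γ] (φ : α → β) (ψ : β → γ)
    (d : α → ℝ) : pushfwd ψ (pushfwd φ d) = pushfwd (ψ ∘ φ) d := by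
  ext c
  simp only [pushfwd_apply]
  calc (∑ b, if ψ b = c then ∑ a, if φ a = b then d a else 0 else 0)
      = ∑ b, ∑ a, if φ a = b then (if ψ b = c then d a else 0) else 0 := by
        refine Finset.sum_congr rfl fun b _ => ?_
        split_ifs <;> simp
    _ = ∑ a, if ψ (φ a) = c then d a else 0 := by
        rw [Finset.sum_comm]
        simp

theorem sum_pushfwd [Fintype β] [DecidableEq β] (φ : α → β) (d : α → ℝ) :
    ∑ b, pushfwd φ d b = ∑ a, d a := by
  simp only [pushfwd_apply]
  rw [Finset.sum_comm]
  simp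

end Pushforward

section Extension

variable {X O : Type} [DecidableEq X]

def extendBy (V : Finset X) (o : O) (t : {x // x ∈ V} → O) : X → O :=
  fun x => if h : x ∈ V then t ⟨x, h⟩ else o

theorem restr_comp_extendBy_self (V : Finset X) (o : O) : restr V ∘ extendBy V o = id := by
  ext t x
  simp [restr, extendBy, x.2]

theorem restr_comp_extendBy (U V : Finset X) (o : O) :
    restr U ∘ extendBy V o =
      restr U ∘ extendBy (U ∩ V) o ∘ restrSec Finset.inter_subset_right := by
  ext t x
  by_cases hx : x.1 ∈ V <;> simp [restr, extendBy, restrSec, hx, x.2]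

omit [DecidableEq X] in
theorem restrSec_comp_restr {U V : Finset X} (h : V ⊆ U) :
    restrSec h ∘ restr (O := O) U = restr V :=
  rfl

variable [Fintype X] [Fintype O] [DecidableEq O]

theorem pushfwd_restr_pushfwd_extendBy_self (V : Finset X) (o : O)
    (g : ({x // x ∈ V} → O) → ℝ) : pushfwd (restr V) (pushfwd (extendBy V o) g) = g := by
  rw [pushfwd_pushfwd, restr_comp_extendBy_self, pushfwd_id]

theorem pushfwd_restr_pushfwd_extendBy_eq_zero {U V : Finset X} (o : O)
    {g : ({x // x ∈ V} → O) → ℝ}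
    (hg : pushfwd (restrSec (V := U ∩ V) Finset.inter_subset_right) g = 0) :
    pushfwd (restr U) (pushfwd (extendBy V o) g) = 0 := by
  rw [pushfwd_pushfwd, restr_comp_extendBy, ← Function.comp_assoc, ← pushfwd_pushfwd, hg,
    map_zero]

end Extension

theorem exists_pushfwd_restr_eq_of_compatible {ι : Type*} {X O : Type} [Fintype X] [DecidableEq X]
    [Fintype O] [DecidableEq O] [Nonempty O] (U : ι → Finset X)
    (f : ∀ i, ({x // x ∈ U i} → O) → ℝ) (𝒮 : Finset ι)
    (hf : ∀ i ∈ 𝒮, ∀ j ∈ 𝒮, pushfwd (restrSec (V := U i ∩ U j) Finset.inter_subset_left) (f i) =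
      pushfwd (restrSec Finset.inter_subset_right) (f j)) :
    ∃ d : (X → O) → ℝ, ∀ i ∈ 𝒮, pushfwd (restr (U i)) d = f i := by
  classical
  induction 𝒮 using Finset.induction_on with
  | empty => exact ⟨0, by simp⟩
  | insert k 𝒮 _ ih =>
    obtain ⟨d, hd⟩ := ih fun i hi j hj =>
      hf i (Finset.mem_insert_of_mem hi) j (Finset.mem_insert_of_mem hj)
    let g := f k - pushfwd (restr (U k)) d
    refine ⟨d + pushfwd (extendBy (U k) (Classical.arbitrary O)) g, fun i hi => ?_⟩
    rw [map_add]
    rcases Finset.mem_insert.mp hi with rfl | hi'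
    · rw [pushfwd_restr_pushfwd_extendBy_self, add_sub_cancel]
    · rw [hd i hi', pushfwd_restr_pushfwd_extendBy_eq_zero, add_zero]
      rw [map_sub, pushfwd_pushfwd, restrSec_comp_restr, sub_eq_zero,
        ← hf i hi k (Finset.mem_insert_self k 𝒮), ← hd i hi', pushfwd_pushfwd, restrSec_comp_restr]

section Empirical

variable {X O : Type} [Fintype X] [DecidableEq X] [Fintype O] [DecidableEq O]
  {𝒰 : Finset (Finset X)} {e : (U : {U // U ∈ 𝒰}) → ({x // x ∈ U.1} → O) → ℝ}

theorem noSignalling_iff_forall_pushfwd_eq :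
    NoSignalling 𝒰 e ↔ ∀ U U' : {U // U ∈ 𝒰},
      pushfwd (restrSec (V := U.1 ∩ U'.1) Finset.inter_subset_left) (eCond 𝒰 e U) =
        pushfwd (restrSec Finset.inter_subset_right) (eCond 𝒰 e U') := by
  simp only [NoSignalling, funext_iff, pushfwd_apply]

theorem noSignalling_iff_exists_eCond_eq_pushfwd [Nonempty O] :
    NoSignalling 𝒰 e ↔ ∃ d : (X → O) → ℝ, ∀ U, eCond 𝒰 e U = pushfwd (restr U.1) d := by
  rw [noSignalling_iff_forall_pushfwd_eq]
  constructor
  · intro h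
    obtain ⟨d, hd⟩ := exists_pushfwd_restr_eq_of_compatible Subtype.val (eCond 𝒰 e)
      Finset.univ fun U _ U' _ => h U U'
    exact ⟨d, fun U => (hd U (Finset.mem_univ U)).symm⟩
  · rintro ⟨d, hd⟩ U U'
    rw [hd, hd, pushfwd_pushfwd, pushfwd_pushfwd, restrSec_comp_restr, restrSec_comp_restr]

theorem realizes_iff {m : (X → O) → {U // U ∈ 𝒰} → ℝ} :
    Realizes 𝒰 m e ↔ ∀ U, e U = pushfwd (restr U.1) (fun ω => m ω U) := by
  simp only [Realizes, funext_iff, pushfwd_apply]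

theorem sum_eCond {U : {U // U ∈ 𝒰}} (hU : eCtx 𝒰 e U ≠ 0) : ∑ s, eCond 𝒰 e U s = 1 := by
  simp only [eCond, ← Finset.sum_div]
  exact div_self hU

theorem exists_lambdaIndep_realization_of_eCond_eq (hsum : ∑ U, eCtx 𝒰 e U = 1)
    (hctx : ∀ U, eCtx 𝒰 e U ≠ 0) {d : (X → O) → ℝ}
    (hd : ∀ U, eCond 𝒰 e U = pushfwd (restr U.1) d) :
    ∃ m, IsSchv 𝒰 m ∧ LambdaIndep 𝒰 m ∧ Realizes 𝒰 m e := by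
  have hd1 : ∑ ω, d ω = 1 := by
    obtain ⟨U, -, -⟩ := Finset.exists_ne_zero_of_sum_ne_zero (hsum ▸ one_ne_zero)
    rw [← sum_pushfwd (restr U.1), ← hd, sum_eCond (hctx U)]
  refine ⟨fun ω U => d ω * eCtx 𝒰 e U, ?_, fun ω U => ?_, realizes_iff.mpr fun U => ?_⟩
  · simp only [IsSchv, ← Finset.mul_sum, hsum, mul_one, hd1]
  · simp only [mOmega, mCtx, ← Finset.mul_sum, ← Finset.sum_mul, hsum, hd1, mul_one, one_mul]
  · have hmU : (fun ω => d ω * eCtx 𝒰 e U) = eCtx 𝒰 e U • d := by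
      ext ω
      exact mul_comm _ _
    ext s
    rw [hmU, map_smul, ← hd, Pi.smul_apply, smul_eq_mul, eCond, mul_div_cancel₀ _ (hctx U)]

theorem eCond_eq_pushfwd_mOmega {m : (X → O) → {U // U ∈ 𝒰} → ℝ}
    (hs : IsSchv 𝒰 m) (hli : LambdaIndep 𝒰 m) (hr : Realizes 𝒰 m e)
    {U : {U // U ∈ 𝒰}} (hU : eCtx 𝒰 e U ≠ 0) :
    eCond 𝒰 e U = pushfwd (restr U.1) (mOmega 𝒰 m) := by
  have hmU : (fun ω => m ω U) = mCtx 𝒰 m U • mOmega 𝒰 m := by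
    ext ω
    rw [hli ω U, Pi.smul_apply, smul_eq_mul, mul_comm]
  have heU : e U = mCtx 𝒰 m U • pushfwd (restr U.1) (mOmega 𝒰 m) := by
    rw [realizes_iff.mp hr U, hmU, map_smul]
  have hctx : eCtx 𝒰 e U = mCtx 𝒰 m U := by
    have hp : ∑ ω, mOmega 𝒰 m ω = 1 := hs
    simp only [eCtx, heU, Pi.smul_apply, smul_eq_mul, ← Finset.mul_sum, sum_pushfwd, hp, mul_one]
  ext s
  rw [eCond, heU, hctx, Pi.smul_apply, smul_eq_mul, mul_div_cancel_left₀ _ (hctx ▸ hU)]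

end Empirical

/-- Main Theorem: an empirical model is No-Signalling iff it is
realized by an schv model satisfying Lambda-Independence. -/
theorem noSignalling_iff_lambdaIndep_realization {X : Type} [Fintype X] [DecidableEq X]
    (l : ℕ) (hl : 0 < l) (𝒰 : Finset (Finset X))
    (e : (U : {U // U ∈ 𝒰}) → ({x // x ∈ U.1} → Fin l) → ℝ)
    (he : IsEmpirical 𝒰 e) :
    NoSignalling 𝒰 e ↔
      ∃ m : (X → Fin l) → {U // U ∈ 𝒰} → ℝ,
        IsSchv 𝒰 m ∧ LambdaIndep 𝒰 m ∧ Realizes 𝒰 m e := by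
  have : Nonempty (Fin l) := ⟨⟨0, hl⟩⟩
  have hctx : ∀ U, eCtx 𝒰 e U ≠ 0 := fun U => (he.2.2 U).ne'
  rw [noSignalling_iff_exists_eCond_eq_pushfwd]
  constructor
  · rintro ⟨d, hd⟩
    exact exists_lambdaIndep_realization_of_eCond_eq he.2.1 hctx hd
  · rintro ⟨m, hs, hli, hr⟩
    exact ⟨mOmega 𝒰 m, fun U => eCond_eq_pushfwd_mOmega hs hli hr (hctx U)⟩
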